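/- arXiv:2406.00558 — 2 statements merged into one kernel-verified Lean document; each statement's English description precedes it below -/
import Mathlib

section
/- Let D be a closed, w-convex, proper subset of the round 2-sphere S² of constant curvature 1. Then D is contained in a closed hemisphere: there exists z ∈ S² such that ⟪z, x⟫_ℝ ≤ 0 for all x ∈ D. -/
notation "⟪" x ", " y "⟫_ℝ" => @inner ℝ _ _ x y

/-- The intrinsic (angular) distance on the unit sphere. -/
noncomputable def sphDist (x y : EuclideanSpace ℝ (Fin 3)) : ℝ := Real.arccos ⟪x, y⟫_ℝ

/-- `γ` is a minimizing geodesic segment from `x` to `y` in the round unit 2-sphere. -/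
def IsMinGeodesic (x y : EuclideanSpace ℝ (Fin 3)) (γ : ℝ → EuclideanSpace ℝ (Fin 3)) : Prop :=
  (∀ t ∈ Set.Icc (0 : ℝ) (sphDist x y), γ t ∈ Metric.sphere (0 : EuclideanSpace ℝ (Fin 3)) 1) ∧
  γ 0 = x ∧ γ (sphDist x y) = y ∧
  ∀ s ∈ Set.Icc (0 : ℝ) (sphDist x y), ∀ t ∈ Set.Icc (0 : ℝ) (sphDist x y),
    sphDist (γ s) (γ t) = |s - t|

/-- `D` is w-convex: any two points of `D` are joined by some minimizing geodesic inside `D`. -/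
def WConvex (D : Set (EuclideanSpace ℝ (Fin 3))) : Prop :=
  ∀ x ∈ D, ∀ y ∈ D, ∃ γ : ℝ → EuclideanSpace ℝ (Fin 3),
    IsMinGeodesic x y γ ∧ ∀ t ∈ Set.Icc (0 : ℝ) (sphDist x y), γ t ∈ D

/-! The cone over `D` is closed, and w-convexity makes it convex: if `x, y ∈ D` and `w ≠ 0` is a
nonnegative combination of them, the point at distance `∠(x, w)` from `x` on a minimizing geodesic
from `x` to `y` has the same angles to `x` and to `y` as `w / ‖w‖`, and both lie in the plane of
`x` and `y`, so the two coincide. A point of the sphere outside `D` lies outside this closed convex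
cone, and a hyperplane separating it from the cone bounds the required hemisphere. -/

open InnerProductGeometry
open scoped NNReal
open NormedSpace

section InnerProductSpace

variable {V : Type*} [NormedAddCommGroup V] [InnerProductSpace ℝ V]

theorem eq_of_mem_span_pair_of_angle_eq {x y p q : V} (hp : ‖p‖ = 1) (hq : ‖q‖ = 1)
    (hspan : p ∈ Submodule.span ℝ {x, y}) (hx : angle x p = angle x q)
    (hy : angle y p = angle y q) : p = q := by
  have inner_eq {u : V} (hu : angle u p = angle u q) : ⟪u, p⟫_ℝ = ⟪u, q⟫_ℝ := by
    rw [← cos_angle_mul_norm_mul_norm, ← cos_angle_mul_norm_mul_norm, hu, hp, hq]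
  obtain ⟨a, b, hab⟩ := Submodule.mem_span_pair.mp hspan
  have hpq : ⟪p, q⟫_ℝ = 1 := by
    calc ⟪p, q⟫_ℝ = a * ⟪x, q⟫_ℝ + b * ⟪y, q⟫_ℝ := by
          rw [← hab, inner_add_left, real_inner_smul_left, real_inner_smul_left]
      _ = ⟪p, p⟫_ℝ := by
          rw [← inner_eq hx, ← inner_eq hy, ← hab, inner_add_left, real_inner_smul_left,
            real_inner_smul_left]
      _ = 1 := by rw [real_inner_self_eq_norm_sq, hp, one_pow]
  exact (inner_eq_one_iff_of_norm_eq_one hp hq).mp hpq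

def coneOver (D : Set V) : Set V := {v | v = 0 ∨ normalize v ∈ D}

theorem smul_mem_coneOver {D : Set V} {v : V} (hv : v ∈ coneOver D) {c : ℝ} (hc : 0 ≤ c) :
    c • v ∈ coneOver D := by
  rcases hc.eq_or_lt with rfl | hc
  · exact Or.inl (zero_smul ℝ v)
  · rcases hv with rfl | hv
    · exact Or.inl (smul_zero c)
    · exact Or.inr (by rwa [normalize_smul_of_pos hc])

theorem mem_coneOver_iff_of_mem_sphere {D : Set V} {q : V} (hq : q ∈ Metric.sphere 0 1) :
    q ∈ coneOver D ↔ q ∈ D := by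
  rw [mem_sphere_zero_iff_norm] at hq
  rw [coneOver, Set.mem_ofPred_eq, normalize_eq_self_of_norm_eq_one hq,
    or_iff_right (norm_ne_zero_iff.mp (hq ▸ one_ne_zero))]

theorem continuousOn_normalize : ContinuousOn (normalize : V → V) {0}ᶜ := fun _ hv =>
  ((continuous_norm.continuousAt.inv₀ (norm_ne_zero_iff.mpr hv)).smul
    continuousAt_id).continuousWithinAt

theorem isClosed_coneOver {D : Set V} (hD : IsClosed D) : IsClosed (coneOver D) := by
  have hcompl : (coneOver D)ᶜ = {0}ᶜ ∩ (normalize : V → V) ⁻¹' Dᶜ := by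
    ext v
    simp [coneOver, not_or]
  rw [← isOpen_compl_iff, hcompl]
  exact continuousOn_normalize.isOpen_inter_preimage isOpen_compl_singleton hD.isOpen_compl

end InnerProductSpace

theorem sphDist_nonneg (x y : EuclideanSpace ℝ (Fin 3)) : 0 ≤ sphDist x y :=
  Real.arccos_nonneg _

theorem sphDist_eq_angle {x y : EuclideanSpace ℝ (Fin 3)} (hx : ‖x‖ = 1) (hy : ‖y‖ = 1) :
    sphDist x y = angle x y := by
  simp [sphDist, angle, hx, hy]

namespace IsMinGeodesic

variable {x y : EuclideanSpace ℝ (Fin 3)} {γ : ℝ → EuclideanSpace ℝ (Fin 3)} {t : ℝ}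

theorem norm_eq_one (hγ : IsMinGeodesic x y γ) (ht : t ∈ Set.Icc 0 (sphDist x y)) :
    ‖γ t‖ = 1 :=
  mem_sphere_zero_iff_norm.mp (hγ.1 t ht)

theorem angle_left (hγ : IsMinGeodesic x y γ) (ht : t ∈ Set.Icc 0 (sphDist x y)) :
    angle x (γ t) = t := by
  have h0 : 0 ∈ Set.Icc 0 (sphDist x y) := Set.left_mem_Icc.mpr (sphDist_nonneg x y)
  calc angle x (γ t) = sphDist (γ 0) (γ t) := by
        rw [sphDist_eq_angle (hγ.norm_eq_one h0) (hγ.norm_eq_one ht), hγ.2.1]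
    _ = |0 - t| := hγ.2.2.2 0 h0 t ht
    _ = t := by rw [zero_sub, abs_neg, abs_of_nonneg ht.1]

theorem angle_right (hγ : IsMinGeodesic x y γ) (ht : t ∈ Set.Icc 0 (sphDist x y)) :
    angle (γ t) y = sphDist x y - t := by
  have hd : sphDist x y ∈ Set.Icc 0 (sphDist x y) := Set.right_mem_Icc.mpr (sphDist_nonneg x y)
  calc angle (γ t) y = sphDist (γ t) (γ (sphDist x y)) := by
        rw [sphDist_eq_angle (hγ.norm_eq_one ht) (hγ.norm_eq_one hd), hγ.2.2.1]
    _ = |t - sphDist x y| := hγ.2.2.2 t ht _ hd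
    _ = sphDist x y - t := by rw [abs_of_nonpos (sub_nonpos.mpr ht.2), neg_sub]

end IsMinGeodesic

namespace WConvex

variable {D : Set (EuclideanSpace ℝ (Fin 3))}

theorem normalize_mem (hsub : D ⊆ Metric.sphere 0 1) (hconv : WConvex D)
    {x y w : EuclideanSpace ℝ (Fin 3)} (hx : x ∈ D) (hy : y ∈ D)
    (hw : w ∈ Submodule.span ℝ≥0 {x, y}) (hw0 : w ≠ 0) : normalize w ∈ D := by
  have hx1 : ‖x‖ = 1 := mem_sphere_zero_iff_norm.mp (hsub hx)
  have hy1 : ‖y‖ = 1 := mem_sphere_zero_iff_norm.mp (hsub hy)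
  have hsum : angle x y = angle x w + angle w y :=
    angle_eq_angle_add_add_angle_add_of_mem_span hw0 hw
  obtain ⟨γ, hγ, hγD⟩ := hconv x hx y hy
  have hs : angle x w ∈ Set.Icc 0 (sphDist x y) :=
    ⟨angle_nonneg x w, by rw [sphDist_eq_angle hx1 hy1, hsum]; linarith [angle_nonneg w y]⟩
  suffices normalize w = γ (angle x w) by
    rw [this]
    exact hγD _ hs
  refine eq_of_mem_span_pair_of_angle_eq (x := x) (y := y) (norm_normalize_eq_one_iff.mpr hw0)
    (hγ.norm_eq_one hs) ?_ ?_ ?_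
  · exact Submodule.smul_mem _ _ (Submodule.span_le_restrictScalars ℝ≥0 ℝ _ hw)
  · rw [angle_normalize_right, hγ.angle_left hs]
  · rw [angle_normalize_right, angle_comm y w, angle_comm y, hγ.angle_right hs,
      sphDist_eq_angle hx1 hy1, hsum, add_sub_cancel_left]

theorem add_mem_coneOver (hsub : D ⊆ Metric.sphere 0 1) (hconv : WConvex D)
    {u v : EuclideanSpace ℝ (Fin 3)} (hu : u ∈ coneOver D) (hv : v ∈ coneOver D) :
    u + v ∈ coneOver D := by
  rcases hu with rfl | hu
  · rwa [zero_add]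
  rcases hv with rfl | hv
  · exact (add_zero u).symm ▸ Or.inr hu
  by_cases huv : u + v = 0
  · exact Or.inl huv
  refine Or.inr (hconv.normalize_mem hsub hu hv ?_ huv)
  refine Submodule.mem_span_pair.mpr ⟨‖u‖₊, ‖v‖₊, ?_⟩
  simp only [NNReal.smul_def, coe_nnnorm, norm_smul_normalize]

def properCone (hsub : D ⊆ Metric.sphere 0 1) (hconv : WConvex D) (hclosed : IsClosed D) :
    ProperCone ℝ (EuclideanSpace ℝ (Fin 3)) where
  carrier := coneOver D
  zero_mem' := Or.inl rfl
  add_mem' := hconv.add_mem_coneOver hsub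
  smul_mem' c _ hv := smul_mem_coneOver hv c.2
  isClosed' := isClosed_coneOver hclosed

end WConvex

/-- A closed w-convex proper subset of the round 2-sphere is contained in a closed hemisphere. -/
theorem stmt_0 (D : Set (EuclideanSpace ℝ (Fin 3)))
    (hsub : D ⊆ Metric.sphere 0 1)
    (hclosed : IsClosed D)
    (hproper : D ≠ Metric.sphere 0 1)
    (hconv : WConvex D) :
    ∃ z ∈ Metric.sphere (0 : EuclideanSpace ℝ (Fin 3)) 1, ∀ x ∈ D, ⟪z, x⟫_ℝ ≤ 0 := by
  obtain ⟨q, hq, hqD⟩ := Set.exists_of_ssubset (hsub.ssubset_of_ne hproper)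
  obtain ⟨y, hyK, hyq⟩ := ProperCone.hyperplane_separation' (hconv.properCone hsub hclosed)
    (x₀ := q) ((mem_coneOver_iff_of_mem_sphere hq).not.mpr hqD)
  have hy0 : y ≠ 0 := by
    rintro rfl
    simp at hyq
  refine ⟨-NormedSpace.normalize y, ?_, fun x hx => ?_⟩
  · rw [mem_sphere_zero_iff_norm, norm_neg, norm_normalize_eq_one_iff]
    exact hy0
  · have hxy := hyK x ((mem_coneOver_iff_of_mem_sphere (hsub hx)).mpr hx)
    rw [inner_neg_left, NormedSpace.normalize, real_inner_smul_left, real_inner_comm, neg_nonpos]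
    positivity
end

section
/- Let D be a closed, s-convex, proper subset of the round 2-sphere S² of constant curvature 1. Then D is contained in an open hemisphere: there exists z ∈ S² such that ⟪z, x⟫_ℝ < 0 for all x ∈ D. -/
/-- `D` is s-convex: every minimizing geodesic segment joining two points of `D` lies in `D`. -/
def SConvex (D : Set (EuclideanSpace ℝ (Fin 3))) : Prop :=
  ∀ x ∈ D, ∀ y ∈ D, ∀ γ : ℝ → EuclideanSpace ℝ (Fin 3),
    IsMinGeodesic x y γ → ∀ t ∈ Set.Icc (0 : ℝ) (sphDist x y), γ t ∈ D

/-!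
No s-convex proper subset `D` of the sphere contains a pair of antipodes `x, -x`: every point of
the sphere lies on a half great circle from `x` to `-x`, which is a minimizing geodesic. Hence any
two points of `D` are joined by a minimizing arc, the normalization of the segment between them,
which lies in `D`; so the positive cone over `D` is a convex cone missing the origin. The convex
hull of `D` therefore misses the origin; it is compact when `D` is, and a hyperplane separating it
from the origin bounds the required open hemisphere.
-/

open Real Set Metric Module

theorem isCompact_convexHull {E : Type*} [NormedAddCommGroup E]
    [NormedSpace ℝ E] [FiniteDimensional ℝ E] {s : Set E} (hs : IsCompact s) :
    IsCompact (convexHull ℝ s) := by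
  let φ (k : ℕ) (p : (Fin k → ℝ) × (Fin k → E)) : E := ∑ i, p.1 i • p.2 i
  let K (k : ℕ) := stdSimplex ℝ (Fin k) ×ˢ univ.pi fun _ : Fin k => s
  have hhull : convexHull ℝ s = ⋃ k ∈ Finset.range (finrank ℝ E + 2), φ k '' K k := by
    refine Subset.antisymm (fun x hx => ?_) ?_
    · obtain ⟨ι, _, z, w, hzs, hz, hw0, hw1, rfl⟩ := eq_pos_convex_span_of_mem_convexHull hx
      have hcard : Fintype.card ι < finrank ℝ E + 2 :=
        Nat.lt_succ_of_le (hz.card_le_finrank_succ.trans (by simpa using Submodule.finrank_le _))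
      let e := (Fintype.equivFin ι).symm
      refine mem_biUnion (Finset.mem_range.2 hcard)
        ⟨(w ∘ e, z ∘ e), ⟨⟨fun i => (hw0 _).le, ?_⟩, fun i _ => hzs (mem_range_self _)⟩, ?_⟩
      · simpa only [Function.comp_apply, e.sum_comp] using hw1
      · exact e.sum_comp fun i => w i • z i
    · simp only [iUnion_subset_iff]
      rintro k - _ ⟨p, ⟨⟨hw0, hw1⟩, hz⟩, rfl⟩
      exact (convex_convexHull ℝ s).sum_mem (fun i _ => hw0 i) hw1
        fun i _ => subset_convexHull ℝ s (hz i trivial)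
  rw [hhull]
  exact (Finset.range _).isCompact_biUnion fun k _ =>
    ((isCompact_stdSimplex _ _).prod (isCompact_univ_pi fun _ => hs)).image (by fun_prop)

theorem exists_inner_neg_of_zero_notMem_convexHull {E : Type*} [NormedAddCommGroup E]
    [InnerProductSpace ℝ E] [FiniteDimensional ℝ E] [Nontrivial E] {s : Set E}
    (hs : IsCompact s) (h0 : (0 : E) ∉ convexHull ℝ s) :
    ∃ z ∈ sphere (0 : E) 1, ∀ x ∈ s, ⟪z, x⟫_ℝ < 0 := by
  obtain ⟨f, u, hf0, hfs⟩ := geometric_hahn_banach_point_closed (convex_convexHull ℝ s)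
    (isCompact_convexHull hs).isClosed h0
  set v := (InnerProductSpace.toDual ℝ E).symm f
  have hv : ∀ x ∈ s, 0 < ⟪v, x⟫_ℝ := fun x hx => by
    rw [InnerProductSpace.toDual_symm_apply]
    exact (map_zero f ▸ hf0).trans (hfs x (subset_convexHull ℝ s hx))
  rcases eq_or_ne v 0 with hv0 | hv0
  · obtain ⟨z, hz⟩ := (NormedSpace.sphere_nonempty (x := (0 : E))).2 zero_le_one
    refine ⟨z, hz, fun x hx => absurd (hv x hx) ?_⟩
    simp [hv0]
  · refine ⟨-(‖v‖⁻¹ • v), ?_, fun x hx => ?_⟩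
    · simp [norm_smul, hv0]
    · rw [inner_neg_left, real_inner_smul_left, neg_neg_iff_pos]
      exact mul_pos (by positivity) (hv x hx)

section GreatCircle

variable {E : Type*} [NormedAddCommGroup E] [InnerProductSpace ℝ E] {x u : E}

theorem inner_cos_smul_add_sin_smul (hx : ‖x‖ = 1) (hu : ‖u‖ = 1) (hxu : ⟪x, u⟫_ℝ = 0)
    (s t : ℝ) :
    ⟪cos s • x + sin s • u, cos t • x + sin t • u⟫_ℝ = cos (s - t) := by
  simp only [inner_add_left, inner_add_right, real_inner_smul_left, real_inner_smul_right,
    inner_self_eq_one_of_norm_eq_one hx, inner_self_eq_one_of_norm_eq_one hu, hxu,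
    real_inner_comm x u, cos_sub]
  ring

theorem norm_cos_smul_add_sin_smul (hx : ‖x‖ = 1) (hu : ‖u‖ = 1) (hxu : ⟪x, u⟫_ℝ = 0)
    (t : ℝ) : ‖cos t • x + sin t • u‖ = 1 := by
  have := inner_cos_smul_add_sin_smul hx hu hxu t t
  rwa [sub_self, cos_zero, real_inner_self_eq_norm_sq,
    pow_eq_one_iff_of_nonneg (norm_nonneg _) two_ne_zero] at this

theorem exists_eq_cos_smul_add_sin_smul {y : E} (hx : ‖x‖ = 1) (hy : ‖y‖ = 1) (hyx : y ≠ x)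
    (hyx' : y ≠ -x) :
    ∃ u : E, ‖u‖ = 1 ∧ ⟪x, u⟫_ℝ = 0 ∧ ∃ d ∈ Ioo 0 π, y = cos d • x + sin d • u := by
  set c := ⟪x, y⟫_ℝ
  have hc1 : c < 1 := (real_inner_le_one_of_norm_eq_one hx hy).lt_of_ne
    fun h => hyx ((inner_eq_one_iff_of_norm_eq_one hx hy).1 h).symm
  have hc2 : -1 < c := (neg_one_le_real_inner_of_norm_eq_one hx hy).lt_of_ne'
    fun h => hyx' (by rw [(inner_eq_neg_one_iff_of_norm_eq_one hx hy).1 h, neg_neg])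
  set v := y - c • x
  have hv : ‖v‖ = sin (arccos c) := by
    have hv2 : ‖v‖ ^ 2 = 1 - c ^ 2 := by
      rw [← real_inner_self_eq_norm_sq]
      simp only [v, inner_sub_left, inner_sub_right, real_inner_smul_left, real_inner_smul_right,
        inner_self_eq_one_of_norm_eq_one hx, inner_self_eq_one_of_norm_eq_one hy,
        real_inner_comm x y, c]
      ring
    rw [sin_arccos, ← hv2, sqrt_sq (norm_nonneg _)]
  have hv0 : ‖v‖ ≠ 0 := by
    rw [hv]; exact (sin_pos_of_pos_of_lt_pi (arccos_pos.2 hc1) (arccos_lt_pi.2 hc2)).ne'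
  refine ⟨‖v‖⁻¹ • v, by simp [norm_smul, hv0], ?_, arccos c,
    ⟨arccos_pos.2 hc1, arccos_lt_pi.2 hc2⟩, ?_⟩
  · simp only [v, real_inner_smul_right, inner_sub_right, inner_self_eq_one_of_norm_eq_one hx, c]
    ring
  · rw [cos_arccos hc2.le hc1.le, ← hv, smul_smul, mul_inv_cancel₀ hv0, one_smul]
    module

end GreatCircle

section SphereGeometry

local notation "E3" => EuclideanSpace ℝ (Fin 3)

variable {x u : E3}

theorem isMinGeodesic_cos_smul_add_sin_smul (hx : ‖x‖ = 1) (hu : ‖u‖ = 1) (hxu : ⟪x, u⟫_ℝ = 0)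
    {d : ℝ} (hd0 : 0 ≤ d) (hdπ : d ≤ π) :
    sphDist x (cos d • x + sin d • u) = d ∧
      IsMinGeodesic x (cos d • x + sin d • u) fun t => cos t • x + sin t • u := by
  have hdist : sphDist x (cos d • x + sin d • u) = d := by
    have := inner_cos_smul_add_sin_smul hx hu hxu 0 d
    rw [cos_zero, sin_zero, one_smul, zero_smul, add_zero, zero_sub, cos_neg] at this
    rw [sphDist, this, arccos_cos hd0 hdπ]
  refine ⟨hdist, fun t _ => mem_sphere_zero_iff_norm.2 (norm_cos_smul_add_sin_smul hx hu hxu t),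
    by simp, by rw [hdist], fun s hs t ht => ?_⟩
  rw [hdist] at hs ht
  have hst : |s - t| ≤ π := abs_sub_le_iff.2 ⟨by linarith [hs.2, ht.1], by linarith [hs.1, ht.2]⟩
  rw [sphDist, inner_cos_smul_add_sin_smul hx hu hxu, ← cos_abs, arccos_cos (abs_nonneg _) hst]

variable {D : Set E3}

theorem SConvex.cos_smul_add_sin_smul_mem (hconv : SConvex D) (hx : ‖x‖ = 1) (hu : ‖u‖ = 1)
    (hxu : ⟪x, u⟫_ℝ = 0) (hxD : x ∈ D) {d t : ℝ} (hdπ : d ≤ π)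
    (hdD : cos d • x + sin d • u ∈ D) (ht0 : 0 ≤ t) (htd : t ≤ d) :
    cos t • x + sin t • u ∈ D := by
  obtain ⟨hdist, hgeo⟩ := isMinGeodesic_cos_smul_add_sin_smul hx hu hxu (ht0.trans htd) hdπ
  exact hconv x hxD _ hdD _ hgeo t ⟨ht0, hdist.symm ▸ htd⟩

theorem SConvex.neg_notMem (hconv : SConvex D) (hsub : D ⊆ sphere 0 1)
    (hproper : D ≠ sphere 0 1) (hxD : x ∈ D) : -x ∉ D := by
  intro hnxD
  refine hproper (Subset.antisymm hsub fun y hy => ?_)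
  have hx := mem_sphere_zero_iff_norm.1 (hsub hxD)
  rcases eq_or_ne y x with rfl | hyx
  · exact hxD
  rcases eq_or_ne y (-x) with rfl | hyx'
  · exact hnxD
  obtain ⟨u, hu, hxu, d, hd, rfl⟩ :=
    exists_eq_cos_smul_add_sin_smul hx (mem_sphere_zero_iff_norm.1 hy) hyx hyx'
  refine hconv.cos_smul_add_sin_smul_mem hx hu hxu hxD le_rfl ?_ hd.1.le hd.2.le
  simpa using hnxD

theorem SConvex.exists_smul_eq_smul_add_smul (hconv : SConvex D) (hsub : D ⊆ sphere 0 1)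
    (hproper : D ≠ sphere 0 1) {y : E3} (hxD : x ∈ D) (hyD : y ∈ D) {a b : ℝ} (ha : 0 < a)
    (hb : 0 < b) : ∃ r > (0 : ℝ), ∃ w ∈ D, a • x + b • y = r • w := by
  rcases eq_or_ne y x with rfl | hyx
  · exact ⟨a + b, by positivity, y, hyD, (add_smul a b y).symm⟩
  have hx := mem_sphere_zero_iff_norm.1 (hsub hxD)
  have hyx' : y ≠ -x := fun h => hconv.neg_notMem hsub hproper hxD (h ▸ hyD)
  obtain ⟨u, hu, hxu, d, ⟨hd0, hdπ⟩, rfl⟩ :=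
    exists_eq_cos_smul_add_sin_smul hx (mem_sphere_zero_iff_norm.1 (hsub hyD)) hyx hyx'
  -- polar coordinates of `a • x + b • y` in the orthonormal frame `x, u`
  set z : ℂ := ⟨a + b * cos d, b * sin d⟩
  have hsin := sin_pos_of_pos_of_lt_pi hd0 hdπ
  have hz : 0 < ‖z‖ := norm_pos_iff.2 fun h => by
    simpa [z, hb.ne', hsin.ne'] using congrArg Complex.im h
  have hre := Complex.norm_mul_cos_arg z
  have him := Complex.norm_mul_sin_arg z
  have harg0 : 0 ≤ z.arg := Complex.arg_nonneg_iff.2 (mul_pos hb hsin).le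
  have hsin_sub : ‖z‖ * sin (d - z.arg) = a * sin d := by
    rw [sin_sub, mul_sub, mul_left_comm, hre, mul_left_comm, him]
    simp only [z]
    ring
  have hargd : z.arg ≤ d := by
    by_contra! h
    have := mul_nonpos_of_nonneg_of_nonpos hz.le (sin_nonpos_of_nonpos_of_neg_pi_le
      (sub_nonpos.2 h.le) (by linarith [Complex.arg_le_pi z]))
    linarith [mul_pos ha hsin]
  refine ⟨‖z‖, hz, _, hconv.cos_smul_add_sin_smul_mem hx hu hxu hxD hdπ.le hyD harg0 hargd, ?_⟩
  rw [smul_add ‖z‖, smul_smul, smul_smul, hre, him]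
  simp only [z]
  module

theorem SConvex.zero_notMem_convexHull (hconv : SConvex D) (hsub : D ⊆ sphere 0 1)
    (hproper : D ≠ sphere 0 1) : (0 : E3) ∉ convexHull ℝ D := by
  let C : ConvexCone ℝ E3 :=
    { carrier := {v | ∃ r > (0 : ℝ), ∃ w ∈ D, v = r • w}
      smul_mem' := by
        rintro c hc _ ⟨r, hr, w, hw, rfl⟩
        exact ⟨c * r, mul_pos hc hr, w, hw, smul_smul c r w⟩
      add_mem' := by
        rintro _ ⟨r, hr, w, hw, rfl⟩ _ ⟨r', hr', w', hw', rfl⟩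
        exact hconv.exists_smul_eq_smul_add_smul hsub hproper hw hw' hr hr' }
  have hDC : D ⊆ C := fun w hw => ⟨1, one_pos, w, hw, (one_smul ℝ w).symm⟩
  intro h0
  obtain ⟨r, hr, w, hw, h⟩ := convexHull_min hDC C.convex h0
  rcases smul_eq_zero.1 h.symm with hr0 | rfl
  · exact hr.ne' hr0
  · simpa using hsub hw

end SphereGeometry

/-- A closed s-convex proper subset of the round 2-sphere is contained in an open hemisphere. -/
theorem stmt_2 (D : Set (EuclideanSpace ℝ (Fin 3)))
    (hsub : D ⊆ Metric.sphere 0 1)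
    (hclosed : IsClosed D)
    (hproper : D ≠ Metric.sphere 0 1)
    (hconv : SConvex D) :
    ∃ z ∈ Metric.sphere (0 : EuclideanSpace ℝ (Fin 3)) 1, ∀ x ∈ D, ⟪z, x⟫_ℝ < 0 :=
  exists_inner_neg_of_zero_notMem_convexHull
    (isCompact_of_isClosed_isBounded hclosed (isBounded_sphere.subset hsub))
    (hconv.zero_notMem_convexHull hsub hproper)
end
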